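/- For every fixed integer δ ≥ 0, Σ_{(δ1,δ2,δ3)} 1^{δ1} · 2^{δ2} · (3/2)^{δ3} · S_{δ1}(d) · S_{δ2}(d) · S_{δ3}(d) = ((3/2)·d³)^δ/δ! + O(d^{3δ−1}) as d → ∞, where the sum ranges over all ordered triples (δ1, δ2, δ3) of nonnegative integers with δ1 + δ2 + δ3 = δ. -/

import Mathlib

open Filter Asymptotics

/-- `S k d = Σ_{d ≥ i₁ ≥ i₂ ≥ ⋯ ≥ i_k ≥ 1} i₁² i₂² ⋯ i_k²`, evaluated in `ℝ`,
with `S 0 d = 1`. -/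
noncomputable def S : ℕ → ℕ → ℝ
  | 0, _ => 1
  | k + 1, d => ∑ i ∈ Finset.Icc 1 d, (i : ℝ) ^ 2 * S k i

/-!
`S_{k+1}(d) = Σ_{i ≤ d} i² S_k(i)` is a Riemann sum for `∫₀^d x² (x³/3)^k/k! dx`, so by induction
`S_k(d) = (d³/3)^k/k! + O(d^{3k-1})`, the error at each step coming from
`|Σ_{i ≤ d} i^m - d^{m+1}/(m+1)| ≤ d^m`. Replacing every `S` by this leading term changes each
triple product by `O(d^{3δ-1})`, and the leading terms add up, by the trinomial theorem, to
`(d³/3 + 2·d³/3 + (3/2)·d³/3)^δ/δ! = ((3/2)d³)^δ/δ!`.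
-/

open Finset Nat

theorem add_pow_div_factorial {K : Type*} [Field K] [CharZero K] (x y : K) (n : ℕ) :
    (x + y) ^ n / n ! = ∑ a ∈ range (n + 1), x ^ a / a ! * (y ^ (n - a) / (n - a)!) := by
  rw [add_pow, sum_div]
  refine sum_congr rfl fun a ha => ?_
  rw [Nat.cast_choose K (Nat.lt_succ_iff.mp (mem_range.mp ha))]
  field_simp [Nat.cast_ne_zero.mpr n.factorial_ne_zero]

theorem add_add_pow_div_factorial {K : Type*} [Field K] [CharZero K] (x y z : K) (n : ℕ) :
    (x + y + z) ^ n / n ! = ∑ a ∈ range (n + 1), ∑ b ∈ range (n - a + 1),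
      x ^ a / a ! * (y ^ b / b !) * (z ^ (n - a - b) / (n - a - b)!) := by
  rw [add_assoc, add_pow_div_factorial]
  refine sum_congr rfl fun a _ => ?_
  rw [add_pow_div_factorial, mul_sum]
  simp only [mul_assoc, Nat.sub_sub]

theorem Asymptotics.IsBigO.mul_sub_mul {α 𝕜 : Type*} [NormedField 𝕜] {l : Filter α}
    {f₁ f₂ g₁ g₂ u₁ u₂ r : α → 𝕜}
    (h₁ : (fun x => f₁ x - g₁ x) =O[l] fun x => u₁ x * r x) (hg₁ : g₁ =O[l] u₁)
    (h₂ : (fun x => f₂ x - g₂ x) =O[l] fun x => u₂ x * r x) (hf₂ : f₂ =O[l] u₂) :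
    (fun x => f₁ x * f₂ x - g₁ x * g₂ x) =O[l] fun x => u₁ x * u₂ x * r x := by
  have h₁₂ := ((h₁.mul hf₂).congr_right fun x => mul_right_comm _ _ _).add
    ((hg₁.mul h₂).congr_right fun x => (mul_assoc _ _ _).symm)
  exact h₁₂.congr_left fun x => by ring

theorem sum_Icc_one_eq_sum_range {M : Type*} [AddCommMonoid M] (f : ℕ → M) (d : ℕ) :
    ∑ i ∈ Icc 1 d, f i = ∑ i ∈ range d, f (i + 1) := by
  rw [range_eq_Ico, sum_Ico_add' f 0 d 1, zero_add, Ico_add_one_right_eq_Icc]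

theorem abs_sum_Icc_pow_sub_le (m d : ℕ) :
    |∑ i ∈ Icc 1 d, (i : ℝ) ^ m - (d : ℝ) ^ (m + 1) / (m + 1)| ≤ (d : ℝ) ^ m := by
  have hmono : MonotoneOn (fun x : ℝ => x ^ m) (Set.Icc 0 (0 + d)) := fun x hx y _ hxy =>
    pow_le_pow_left₀ hx.1 hxy m
  have hint : ∫ x in (0 : ℝ)..0 + d, x ^ m = (d : ℝ) ^ (m + 1) / (m + 1) := by
    simp [integral_pow]
  have hlower := hmono.integral_le_sum
  have hupper := hmono.sum_le_integral
  have hshift : ∑ i ∈ range d, ((i + 1 : ℕ) : ℝ) ^ m + 0 ^ m =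
      ∑ i ∈ range d, (i : ℝ) ^ m + (d : ℝ) ^ m := by
    have := sum_range_succ' (fun i : ℕ => (i : ℝ) ^ m) d
    rw [sum_range_succ] at this
    push_cast at this ⊢
    linarith
  rw [hint] at hlower hupper
  simp only [zero_add] at hlower hupper
  rw [sum_Icc_one_eq_sum_range (fun i : ℕ => (i : ℝ) ^ m), abs_le]
  have : (0 : ℝ) ≤ 0 ^ m := pow_nonneg le_rfl m
  constructor <;> linarith

noncomputable def leadS (k : ℕ) (x : ℝ) : ℝ := (x ^ 3 / 3) ^ k / k !

theorem one_le_three_pow_mul_factorial (k : ℕ) : (1 : ℝ) ≤ 3 ^ k * k ! := by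
  have h₁ : (1 : ℝ) ≤ k ! := by exact_mod_cast k.factorial_pos
  have h₃ : (1 : ℝ) ≤ 3 ^ k := one_le_pow₀ (by norm_num)
  nlinarith

theorem leadS_eq (k : ℕ) (x : ℝ) : leadS k x = x ^ (3 * k) / (3 ^ k * k !) := by
  rw [leadS, div_pow, ← pow_mul, div_div]

theorem leadS_succ (k : ℕ) (x : ℝ) :
    leadS (k + 1) x = x ^ (3 * k + 2 + 1) / ((3 * k + 2 : ℕ) + 1) / (3 ^ k * k !) := by
  rw [leadS_eq, Nat.factorial_succ]
  push_cast
  field_simp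
  ring

theorem abs_sum_sq_mul_leadS_sub_leadS_succ_le (k d : ℕ) :
    |∑ i ∈ Icc 1 d, (i : ℝ) ^ 2 * leadS k i - leadS (k + 1) d| ≤ (d : ℝ) ^ (3 * k + 2) := by
  have hsum : ∑ i ∈ Icc 1 d, (i : ℝ) ^ 2 * leadS k i =
      (∑ i ∈ Icc 1 d, (i : ℝ) ^ (3 * k + 2)) / (3 ^ k * k !) := by
    rw [sum_div]
    exact sum_congr rfl fun i _ => by rw [leadS_eq]; ring
  have hc := one_le_three_pow_mul_factorial k
  rw [hsum, leadS_succ, ← sub_div, abs_div, abs_of_pos (zero_lt_one.trans_le hc)]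
  exact (div_le_self (abs_nonneg _) hc).trans (abs_sum_Icc_pow_sub_le _ d)

-- Multiplied by `d` rather than divided by it, so that the bound needs no case `d = 0`.
theorem exists_abs_S_sub_leadS_mul_le (k : ℕ) :
    ∃ C, 0 ≤ C ∧ ∀ d : ℕ, |S k d - leadS k d| * d ≤ C * (d : ℝ) ^ (3 * k) := by
  induction k with
  | zero => exact ⟨0, le_rfl, fun d => by simp [S, leadS]⟩
  | succ k ih =>
    obtain ⟨C, hC, hle⟩ := ih
    refine ⟨C + 1, by linarith, fun d => ?_⟩
    have hsplit : S (k + 1) d - leadS (k + 1) d =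
        (∑ i ∈ Icc 1 d, (i : ℝ) ^ 2 * leadS k i - leadS (k + 1) d) +
          ∑ i ∈ Icc 1 d, (i : ℝ) ^ 2 * (S k i - leadS k i) := by
      simp only [S, mul_sub, sum_sub_distrib]
      ring
    have herr : |∑ i ∈ Icc 1 d, (i : ℝ) ^ 2 * (S k i - leadS k i)| ≤ d * (C * d ^ (3 * k + 1)) :=
      calc _ ≤ ∑ i ∈ Icc 1 d, |(i : ℝ) ^ 2 * (S k i - leadS k i)| := abs_sum_le_sum_abs _ _
        _ ≤ ∑ i ∈ Icc 1 d, C * (d : ℝ) ^ (3 * k + 1) := by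
          refine sum_le_sum fun i hi => ?_
          have hid : (i : ℝ) ≤ d := by exact_mod_cast (mem_Icc.mp hi).2
          calc |(i : ℝ) ^ 2 * (S k i - leadS k i)|
              = i * (|S k i - leadS k i| * i) := by
                rw [abs_mul, abs_pow, abs_of_nonneg i.cast_nonneg]
                ring
            _ ≤ i * (C * (i : ℝ) ^ (3 * k)) := mul_le_mul_of_nonneg_left (hle i) i.cast_nonneg
            _ = C * (i : ℝ) ^ (3 * k + 1) := by ring
            _ ≤ C * (d : ℝ) ^ (3 * k + 1) := by gcongr
        _ = d * (C * d ^ (3 * k + 1)) := by simp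
    calc |S (k + 1) d - leadS (k + 1) d| * d
        ≤ ((d : ℝ) ^ (3 * k + 2) + d * (C * d ^ (3 * k + 1))) * d := by
          rw [hsplit]
          gcongr
          exact (abs_add_le _ _).trans
            (add_le_add (abs_sum_sq_mul_leadS_sub_leadS_succ_le k d) herr)
      _ = (C + 1) * (d : ℝ) ^ (3 * (k + 1)) := by ring

theorem S_sub_leadS_isBigO (k : ℕ) :
    (fun d : ℕ => S k d - leadS k d) =O[atTop] fun d => (d : ℝ) ^ (3 * k) * (d : ℝ)⁻¹ := by
  obtain ⟨C, -, hle⟩ := exists_abs_S_sub_leadS_mul_le k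
  refine IsBigO.of_bound C ((eventually_ne_atTop 0).mono fun d hd => ?_)
  have hpos : (0 : ℝ) < d := by positivity
  rw [Real.norm_eq_abs, Real.norm_of_nonneg (by positivity), ← mul_assoc, ← div_eq_mul_inv,
    le_div_iff₀ hpos]
  exact hle d

theorem leadS_isBigO (k : ℕ) : (fun d : ℕ => leadS k d) =O[atTop] fun d => (d : ℝ) ^ (3 * k) :=
  (isBigO_const_mul_self (3 ^ k * k ! : ℝ)⁻¹ _ _).congr_left fun d => by
    rw [leadS_eq, div_eq_inv_mul]

theorem S_isBigO (k : ℕ) : (fun d : ℕ => S k d) =O[atTop] fun d => (d : ℝ) ^ (3 * k) := by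
  have hinv : (fun d : ℕ => (d : ℝ)⁻¹) =O[atTop] fun _ => (1 : ℝ) :=
    (tendsto_inv_atTop_zero.comp tendsto_natCast_atTop_atTop).isBigO_one ℝ
  have herr := (S_sub_leadS_isBigO k).trans
    (((isBigO_refl (fun d : ℕ => (d : ℝ) ^ (3 * k)) atTop).mul hinv).congr_right fun d => mul_one _)
  exact (herr.add (leadS_isBigO k)).congr_left fun d => sub_add_cancel _ _

theorem S_mul_S_mul_S_sub_isBigO (a b c : ℕ) :
    (fun d : ℕ => S a d * S b d * S c d - leadS a d * leadS b d * leadS c d) =O[atTop]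
      fun d => (d : ℝ) ^ (3 * (a + b + c)) * (d : ℝ)⁻¹ :=
  (((S_sub_leadS_isBigO a).mul_sub_mul (leadS_isBigO a) (S_sub_leadS_isBigO b)
    (S_isBigO b)).mul_sub_mul ((leadS_isBigO a).mul (leadS_isBigO b)) (S_sub_leadS_isBigO c)
    (S_isBigO c)).congr_right fun d => by ring

theorem sum_mul_leadS_mul_leadS_mul_leadS (δ : ℕ) (x : ℝ) :
    ∑ a ∈ range (δ + 1), ∑ b ∈ range (δ - a + 1),
      (1 : ℝ) ^ a * 2 ^ b * (3 / 2) ^ (δ - a - b) * leadS a x * leadS b x * leadS (δ - a - b) x =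
    ((3 / 2) * x ^ 3) ^ δ / δ ! := by
  have h := add_add_pow_div_factorial (x ^ 3 / 3) (2 * (x ^ 3 / 3)) (3 / 2 * (x ^ 3 / 3)) δ
  rw [show x ^ 3 / 3 + 2 * (x ^ 3 / 3) + 3 / 2 * (x ^ 3 / 3) = 3 / 2 * x ^ 3 by ring] at h
  rw [h]
  refine sum_congr rfl fun a _ => sum_congr rfl fun b _ => ?_
  simp only [leadS, mul_pow, one_pow]
  ring

/-- For fixed `δ ≥ 0`, summing over all ordered triples `(δ1, δ2, δ3)` of nonnegative
integers with `δ1 + δ2 + δ3 = δ`,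
`Σ 1^{δ1} 2^{δ2} (3/2)^{δ3} S_{δ1}(d) S_{δ2}(d) S_{δ3}(d) = ((3/2)d³)^δ/δ! + O(d^{3δ−1})`. -/
theorem stmt4 (δ : ℕ) :
    (fun d : ℕ =>
        (∑ δ1 ∈ Finset.range (δ + 1), ∑ δ2 ∈ Finset.range (δ - δ1 + 1),
          (1 : ℝ) ^ δ1 * 2 ^ δ2 * (3 / 2) ^ (δ - δ1 - δ2) *
            S δ1 d * S δ2 d * S (δ - δ1 - δ2) d)
        - ((3 / 2) * (d : ℝ) ^ 3) ^ δ / (Nat.factorial δ)) =O[atTop]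
      fun d : ℕ => (d : ℝ) ^ ((3 * δ : ℤ) - 1) := by
  have hsum : (fun d : ℕ => ∑ a ∈ range (δ + 1), ∑ b ∈ range (δ - a + 1),
      (1 : ℝ) ^ a * 2 ^ b * (3 / 2) ^ (δ - a - b) * (S a d * S b d * S (δ - a - b) d -
        leadS a d * leadS b d * leadS (δ - a - b) d)) =O[atTop]
      fun d => (d : ℝ) ^ (3 * δ) * (d : ℝ)⁻¹ := by
    refine IsBigO.fun_sum fun a ha => IsBigO.fun_sum fun b hb => ?_
    have hδ : a + b + (δ - a - b) = δ := by simp only [mem_range] at ha hb; omega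
    simpa only [hδ] using (S_mul_S_mul_S_sub_isBigO a b (δ - a - b)).const_mul_left _
  refine hsum.congr' (Eventually.of_forall fun d => ?_)
    ((eventually_ne_atTop 0).mono fun d hd => ?_)
  · dsimp only
    rw [← sum_mul_leadS_mul_leadS_mul_leadS, ← sum_sub_distrib]
    refine sum_congr rfl fun a _ => ?_
    rw [← sum_sub_distrib]
    exact sum_congr rfl fun b _ => by ring
  · have hd' : (d : ℝ) ≠ 0 := Nat.cast_ne_zero.mpr hd
    simp only [zpow_sub_one₀ hd']
    norm_cast
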